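/- Let B be an associative algebra over k, and let V be a left B-module containing vectors v₁, …, v_n that are linearly independent over B (that is, V contains a free submodule isomorphic to B^n with basis v₁, …, v_n). Then V^{⊗n} is a faithful module over the semidirect product algebra kS_n ⋉ B^{⊗n}, where S_n acts on B^{⊗n} by permuting the tensor factors and acts on V^{⊗n} by permuting the tensor factors. -/
import Mathlib


open TensorProduct

/-- The action of `B` on `V` as `k`-linear endomorphisms. -/
noncomputable def moduleToEnd (k B V : Type) [CommSemiring k] [Semiring B] [Algebra k B]
    [AddCommMonoid V] [Module k V] [Module B V] [IsScalarTower k B V] [SMulCommClass k B V] :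
    B →ₗ[k] Module.End k V where
  toFun b :=
    { toFun := fun v => b • v
      map_add' := fun v w => smul_add b v w
      map_smul' := fun c v => (smul_comm c b v).symm }
  map_add' b b' := by ext v; exact add_smul b b' v
  map_smul' c b := by ext v; exact smul_assoc c b v

/-- The componentwise action of `B^{⊗ n}` on `V^{⊗ n}`:
`(b_1 ⊗ ⋯ ⊗ b_n) ⬝ (v_1 ⊗ ⋯ ⊗ v_n) = (b_1 • v_1) ⊗ ⋯ ⊗ (b_n • v_n)`. -/
noncomputable def tensorPowerAction (k B V : Type) [CommSemiring k] [Semiring B] [Algebra k B]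
    [AddCommMonoid V] [Module k V] [Module B V] [IsScalarTower k B V] [SMulCommClass k B V]
    (n : ℕ) :
    (⨂[k] _i : Fin n, B) →ₗ[k] Module.End k (⨂[k] _i : Fin n, V) :=
  PiTensorProduct.piTensorHomMap ∘ₗ
    PiTensorProduct.map (fun _i : Fin n => moduleToEnd k B V)

/-- The permutation operator on `V^{⊗ n}` attached to `σ ∈ S_n`. -/
noncomputable def permOperator (k V : Type) [CommSemiring k] [AddCommMonoid V] [Module k V]
    (n : ℕ) (σ : Equiv.Perm (Fin n)) :
    Module.End k (⨂[k] _i : Fin n, V) :=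
  (PiTensorProduct.reindex k (fun _i : Fin n => V) σ).toLinearMap

/-- The combined representation of the semidirect (crossed) product algebra `k S_n ⋉ B^{⊗ n}`
on `V^{⊗ n}` (`B^{⊗ n}` acts componentwise and `S_n` permutes the tensor factors), as a linear
map on the underlying vector space `k S_n ⊗ B^{⊗ n}` of the crossed product; the module
`V^{⊗ n}` is faithful over `k S_n ⋉ B^{⊗ n}` precisely when this map is injective. -/
noncomputable def crossedProductRep (k B V : Type) [CommSemiring k] [Semiring B] [Algebra k B]
    [AddCommMonoid V] [Module k V] [Module B V] [IsScalarTower k B V] [SMulCommClass k B V]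
    (n : ℕ) :
    ((Equiv.Perm (Fin n) →₀ k) ⊗[k] (⨂[k] _i : Fin n, B)) →ₗ[k]
      Module.End k (⨂[k] _i : Fin n, V) :=
  TensorProduct.lift (Finsupp.lsum k fun σ : Equiv.Perm (Fin n) =>
    LinearMap.toSpanSingleton k _
      ((LinearMap.mulLeft k (permOperator k V n σ)) ∘ₗ tensorPowerAction k B V n))

/-- **Statement 5.** Let `B` be an associative algebra over `k` and `V` a `B`-module containing
vectors `v_1, …, v_n` linearly independent over `B`.  Then `V^{⊗ n}` is a faithful module over
the semidirect product algebra `k S_n ⋉ B^{⊗ n}`, i.e. the representation map above is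
injective. -/
theorem tensorPower_faithful_crossedProduct
    (k : Type) [Field k] [IsAlgClosed k] [CharZero k]
    (B : Type) [Ring B] [Algebra k B]
    (V : Type) [AddCommGroup V] [Module k V] [Module B V]
    [IsScalarTower k B V] [SMulCommClass k B V]
    (n : ℕ) (v : Fin n → V)
    (hv : ∀ b : Fin n → B, (∑ i, b i • v i) = 0 → ∀ i, b i = 0) :
    Function.Injective (crossedProductRep k B V n) := by
  -- Step 1: projections p j : V →ₗ[k] B with p j (b • v i) = δ_{ji} b
  have hproj : ∃ p : Fin n → (V →ₗ[k] B),
      ∀ j i b, p j (b • (v i)) = if j = i then b else 0 := by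
    let β : (Fin n → B) →ₗ[k] V :=
      { toFun := fun b => ∑ i, b i • v i
        map_add' := fun b b' => by simp [add_smul, Finset.sum_add_distrib]
        map_smul' := fun c b => by simp [smul_assoc, Finset.smul_sum] }
    have hker : LinearMap.ker β = ⊥ := by
      rw [LinearMap.ker_eq_bot']
      intro b hb
      funext i
      exact hv b hb i
    obtain ⟨g, hg⟩ := β.exists_leftInverse_of_injective hker
    refine ⟨fun j => (LinearMap.proj j) ∘ₗ g, fun j i b => ?_⟩
    have h1 : b • v i = β (Pi.single i b) := by
      simp [β, Pi.single_apply, ite_smul]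
    have h2 : g (β (Pi.single i b)) = Pi.single i b := by
      rw [← LinearMap.comp_apply, hg]; rfl
    simp [h1, h2, Pi.single_apply]
  obtain ⟨p, hp⟩ := hproj
  -- Step 2: extraction maps
  set u₀ : ⨂[k] _i : Fin n, V := PiTensorProduct.tprod k v with hu₀
  let L : Equiv.Perm (Fin n) → ((⨂[k] _i : Fin n, V) →ₗ[k] ⨂[k] _i : Fin n, B) :=
    fun σ => (PiTensorProduct.reindex k (fun _ : Fin n => B) σ).symm.toLinearMap ∘ₗ
      PiTensorProduct.map (fun j => p (σ.symm j))
  let e := TensorProduct.finsuppScalarLeft k (⨂[k] _i : Fin n, B) (Equiv.Perm (Fin n))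
  -- Key identity
  have key : ∀ σ : Equiv.Perm (Fin n),
      (L σ) ∘ₗ (LinearMap.applyₗ u₀) ∘ₗ (crossedProductRep k B V n) =
      (Finsupp.lapply σ) ∘ₗ (e : _ →ₗ[k] _) := by
    intro σ
    ext σ' f
    show (L σ) ((crossedProductRep k B V n) (Finsupp.single σ' 1 ⊗ₜ[k] PiTensorProduct.tprod k f) u₀) = _
    have hrep : (crossedProductRep k B V n) (Finsupp.single σ' 1 ⊗ₜ[k] PiTensorProduct.tprod k f) u₀
        = PiTensorProduct.tprod k (fun j => f (σ'.symm j) • v (σ'.symm j)) := by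
      simp only [crossedProductRep, TensorProduct.lift.tmul, Finsupp.lsum_single,
        LinearMap.toSpanSingleton_apply, one_smul, LinearMap.comp_apply,
        LinearMap.mulLeft_apply, Module.End.mul_apply, tensorPowerAction,
        PiTensorProduct.map_tprod, PiTensorProduct.piTensorHomMap_tprod_tprod,
        permOperator, LinearEquiv.coe_coe, hu₀, PiTensorProduct.reindex_tprod]
      rfl
    rw [hrep]
    have hL : (L σ) (PiTensorProduct.tprod k (fun j => f (σ'.symm j) • v (σ'.symm j)))
        = if σ = σ' then PiTensorProduct.tprod k f else 0 := by
      by_cases hσ : σ = σ'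
      · subst hσ
        rw [if_pos rfl]
        simp only [L, LinearMap.comp_apply, PiTensorProduct.map_tprod, LinearEquiv.coe_coe]
        have h1 : (fun j => (p (σ.symm j)) (f (σ.symm j) • v (σ.symm j)))
            = fun j => f (σ.symm j) := by
          funext j; rw [hp]; simp
        rw [h1, LinearEquiv.symm_apply_eq, PiTensorProduct.reindex_tprod]
      · rw [if_neg hσ]
        obtain ⟨j₀, hj₀⟩ : ∃ j, σ.symm j ≠ σ'.symm j := by
          by_contra h
          push_neg at h
          have hsymm : σ.symm = σ'.symm := Equiv.ext h
          exact hσ (by rw [← σ.symm_symm, ← σ'.symm_symm, hsymm])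
        simp only [L, LinearMap.comp_apply, PiTensorProduct.map_tprod, LinearEquiv.coe_coe]
        have h1 : (fun j => (p (σ.symm j)) (f (σ'.symm j) • v (σ'.symm j))) j₀ = 0 := by
          simp only; rw [hp, if_neg hj₀]
        rw [MultilinearMap.map_coord_zero _ j₀ h1, map_zero]
    rw [hL]
    simp only [e, LinearMap.comp_apply, LinearEquiv.coe_coe,
      TensorProduct.finsuppScalarLeft_apply_tmul_apply, Finsupp.lapply_apply,
      Finsupp.single_apply]
    by_cases h : σ = σ'
    · subst h
      simp [e]
    · simp [e, h, Finsupp.single_apply, if_neg (fun hh : σ' = σ => h hh.symm)]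
  -- Step 3: conclude
  rw [← LinearMap.ker_eq_bot (M := (Equiv.Perm (Fin n) →₀ k) ⊗[k] (⨂[k] _i : Fin n, B))
    (f := crossedProductRep k B V n), eq_bot_iff]
  intro x hx
  have hx0 : crossedProductRep k B V n x = 0 := hx
  have : e x = 0 := by
    ext σ
    have := congrArg (fun φ => φ x) (key σ)
    simpa [hx0] using this.symm
  simpa using e.map_eq_zero_iff.mp this
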